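/- arXiv:1404.0339 — 2 statements merged into one kernel-verified Lean document; each statement's English description precedes it below -/
import Mathlib

section
/- Let ε > 0 and let K ⊆ ℝⁿ be a measurable set with Gaussian measure γₙ(K) ≥ e^{-εn}. Then the set K_{3√(εn)} of points at Euclidean distance at most 3√(εn) from K has Gaussian measure γₙ(K_{3√(εn)}) ≥ 1 - e^{-εn}. -/
/-!
Maurey's property (τ) of the Gaussian measure: `γ(K) ∫ exp (d(x, K)² / 4) dγ(x) ≤ 1`. With
`φ(x) = exp (-‖x‖² / 2)`, this is the Prékopa–Leindler inequality `(∫ f)(∫ g) ≤ (∫ h)²`, valid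
whenever `f x * g y ≤ h ((x + y) / 2) ^ 2`, for `f = exp (d(·, K)² / 4) φ`, `g = 1_K φ` and `h = φ`:
for `y ∈ K`, `d(x, K)² / 4 ≤ ‖x - y‖² / 4 = (‖x‖² + ‖y‖²) / 2 - ‖(x + y) / 2‖²`.
Markov's inequality then gives `γ(K) γ(K_δᶜ) ≤ exp (-δ² / 4)`, which for `δ = 3 √(εn)` is at most
`exp (-εn) γ(K)`.

Prékopa–Leindler tensorizes by Fubini, so it is needed only on `ℝ`. There, once `f` and `g` are
rescaled to have the same supremum, the superlevel sets `{f > t}` and `{g > t}` are nonempty for the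
same `t`, their sum lies in `2 • {h > t}`, and the one-dimensional Brunn–Minkowski inequality
`|A| + |B| ≤ |A + B|` integrated over `t` (layer cake) gives `∫ f + ∫ g ≤ 2 ∫ h`; the AM–GM
inequality turns this into the product form.
-/

open MeasureTheory Real

noncomputable def gaussian (n : ℕ) : Measure (EuclideanSpace ℝ (Fin n)) :=
  volume.withDensity fun x =>
    ENNReal.ofReal ((2 * π) ^ (-(n : ℝ) / 2) * Real.exp (-‖x‖ ^ 2 / 2))

open Set Pointwise Metric
open scoped ENNReal NNReal

theorem ENNReal.four_mul_le_sq_add (a b : ℝ≥0∞) : 4 * a * b ≤ (a + b) ^ 2 := by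
  rcases eq_or_ne a ∞ with rfl | ha
  · simp
  rcases eq_or_ne b ∞ with rfl | hb
  · simp
  lift a to ℝ≥0 using ha
  lift b to ℝ≥0 using hb
  exact_mod_cast _root_.four_mul_le_sq_add a b

theorem ENNReal.exists_inv_mul_eq_mul {c d : ℝ≥0∞} (hc₀ : c ≠ 0) (hc : c ≠ ∞) (hd₀ : d ≠ 0)
    (hd : d ≠ ∞) : ∃ r : ℝ≥0∞, r ≠ 0 ∧ r ≠ ∞ ∧ r⁻¹ * c = r * d := by
  lift c to ℝ≥0 using hc
  lift d to ℝ≥0 using hd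
  have hs : NNReal.sqrt (c / d) ≠ 0 := by simp_all
  refine ⟨NNReal.sqrt (c / d), by simpa using hs, ENNReal.coe_ne_top, ?_⟩
  rw [← ENNReal.coe_inv hs]
  norm_cast
  rw [inv_mul_eq_iff_eq_mul₀ hs, ← mul_assoc, NNReal.mul_self_sqrt,
    div_mul_cancel₀ _ (by simpa using hd₀)]

theorem ENNReal.iSup_min_natCast (a : ℝ≥0∞) : ⨆ N : ℕ, min a N = a := by
  rw [← inf_iSup_eq, ENNReal.iSup_natCast, inf_top_eq]

theorem MeasureTheory.lintegral_eq_lintegral_meas_ofReal_lt {α : Type*} [MeasurableSpace α]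
    {μ : Measure α} {f : α → ℝ≥0∞} (hf : AEMeasurable f μ) :
    ∫⁻ x, f x ∂μ = ∫⁻ t in Ioi 0, μ {x | ENNReal.ofReal t < f x} := by
  by_cases htop : μ {x | f x = ∞} = 0
  · have hfin : ∀ᵐ x ∂μ, f x ≠ ∞ := measure_eq_zero_iff_ae_notMem.1 htop
    calc ∫⁻ x, f x ∂μ = ∫⁻ x, ENNReal.ofReal (f x).toReal ∂μ :=
          lintegral_congr_ae (hfin.mono fun x hx => (ENNReal.ofReal_toReal hx).symm)
      _ = ∫⁻ t in Ioi 0, μ {x | t < (f x).toReal} :=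
          lintegral_eq_lintegral_meas_lt μ (ae_of_all _ fun _ => ENNReal.toReal_nonneg)
            hf.ennreal_toReal
      _ = ∫⁻ t in Ioi 0, μ {x | ENNReal.ofReal t < f x} :=
          setLIntegral_congr_fun measurableSet_Ioi fun t ht => measure_congr <|
            hfin.mono fun x hx => propext (ENNReal.ofReal_lt_iff_lt_toReal (le_of_lt ht) hx).symm
  · rw [lintegral_eq_top_of_measure_eq_top_ne_zero hf htop, eq_comm, eq_top_iff]
    calc ∞ = ∫⁻ _ in Ioi (0 : ℝ), μ {x | f x = ∞} := by simp [htop]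
      _ ≤ _ := lintegral_mono fun t => measure_mono fun x (hx : f x = ∞) => by simp [hx]

theorem IsCompact.volume_add_volume_le_volume_add {K L : Set ℝ} (hK : IsCompact K)
    (hL : IsCompact L) (hK₀ : K.Nonempty) (hL₀ : L.Nonempty) :
    volume K + volume L ≤ volume (K + L) := by
  set a := sSup K
  set b := sInf L
  have ha : a ∈ K := hK.sSup_mem hK₀
  have hb : b ∈ L := hL.sInf_mem hL₀
  have hinter : (K + {b}) ∩ ({a} + L) ⊆ {a + b} := by
    rintro _ ⟨⟨x, hx, _, rfl, rfl⟩, ⟨_, rfl, y, hy, hxy⟩⟩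
    have := le_csSup hK.bddAbove hx
    have := csInf_le hL.bddBelow hy
    rw [mem_singleton_iff]
    linarith
  calc volume K + volume L = volume (K + {b}) + volume ({a} + L) := by
        rw [add_singleton, singleton_add, image_add_right, image_add_left,
          measure_preimage_add_right, measure_preimage_add]
    _ = volume ((K + {b}) ∪ ({a} + L)) := by
        rw [← measure_union_add_inter' (hK.add isCompact_singleton).measurableSet,
          measure_mono_null hinter (measure_singleton _), add_zero]
    _ ≤ volume (K + L) := measure_mono <| union_subset
        (add_subset_add_left (singleton_subset_iff.2 hb))
        (add_subset_add_right (singleton_subset_iff.2 ha))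

theorem Real.volume_add_volume_le_volume_add {A B : Set ℝ} (hA : MeasurableSet A)
    (hB : MeasurableSet B) (hA₀ : A.Nonempty) (hB₀ : B.Nonempty) :
    volume A + volume B ≤ volume (A + B) := by
  obtain ⟨a, ha⟩ := hA₀
  obtain ⟨b, hb⟩ := hB₀
  rw [hA.measure_eq_iSup_isCompact, hB.measure_eq_iSup_isCompact]
  simp_rw [iSup_and']
  refine ENNReal.biSup_add_biSup_le' ⟨∅, empty_subset _, isCompact_empty⟩
    ⟨∅, empty_subset _, isCompact_empty⟩ fun K ⟨hKA, hK⟩ L ⟨hLB, hL⟩ => ?_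
  calc volume K + volume L ≤ volume (insert a K) + volume (insert b L) :=
        add_le_add (measure_mono (subset_insert _ _)) (measure_mono (subset_insert _ _))
    _ ≤ volume (insert a K + insert b L) :=
        (hK.insert a).volume_add_volume_le_volume_add (hL.insert b)
          (insert_nonempty _ _) (insert_nonempty _ _)
    _ ≤ volume (A + B) :=
        measure_mono (add_subset_add (insert_subset ha hKA) (insert_subset hb hLB))

theorem Real.volume_superlevel_add_le_of_iSup_eq {f g h : ℝ → ℝ≥0∞} (hf : Measurable f)
    (hg : Measurable g) (hfg : ⨆ x, f x = ⨆ y, g y)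
    (hfgh : ∀ x y, f x * g y ≤ h (midpoint ℝ x y) ^ 2) (t : ℝ≥0∞) :
    volume {x | t < f x} + volume {y | t < g y} ≤ 2 * volume {z | t < h z} := by
  by_cases ht : t < ⨆ x, f x
  · obtain ⟨x, hx⟩ := lt_iSup_iff.1 ht
    obtain ⟨y, hy⟩ := lt_iSup_iff.1 (hfg ▸ ht)
    have hsum : {x | t < f x} + {y | t < g y} ⊆ (2 : ℝ) • {z | t < h z} := by
      rintro _ ⟨x, hx, y, hy, rfl⟩
      refine ⟨midpoint ℝ x y, ?_, by simp [midpoint_eq_smul_add]⟩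
      change t < h _
      by_contra! hle
      have hlt := (ENNReal.mul_lt_mul hx hy).trans_le
        ((hfgh x y).trans (pow_le_pow_left₀ bot_le hle 2))
      exact (sq t ▸ hlt).false
    calc volume {x | t < f x} + volume {y | t < g y}
        ≤ volume ({x | t < f x} + {y | t < g y}) :=
          Real.volume_add_volume_le_volume_add (measurableSet_lt measurable_const hf)
            (measurableSet_lt measurable_const hg) ⟨x, hx⟩ ⟨y, hy⟩
      _ ≤ 2 * volume {z | t < h z} := by
          grw [hsum, Measure.addHaar_smul]
          simp
  · have hempty : ∀ φ : ℝ → ℝ≥0∞, ⨆ x, φ x ≤ t → {x | t < φ x} = ∅ := fun φ hφ =>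
      eq_empty_of_forall_notMem fun x hx => (le_iSup φ x |>.trans hφ).not_gt hx
    rw [not_lt] at ht
    rw [hempty f ht, hempty g (hfg ▸ ht)]
    simp

theorem Real.lintegral_add_lintegral_le_of_iSup_eq {f g h : ℝ → ℝ≥0∞} (hf : Measurable f)
    (hg : Measurable g) (hh : Measurable h) (hfg : ⨆ x, f x = ⨆ y, g y)
    (hfgh : ∀ x y, f x * g y ≤ h (midpoint ℝ x y) ^ 2) :
    (∫⁻ x, f x) + ∫⁻ y, g y ≤ 2 * ∫⁻ z, h z := by
  rw [lintegral_eq_lintegral_meas_ofReal_lt hf.aemeasurable,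
    lintegral_eq_lintegral_meas_ofReal_lt hg.aemeasurable,
    lintegral_eq_lintegral_meas_ofReal_lt hh.aemeasurable]
  calc _ ≤ ∫⁻ t in Ioi 0, (volume {x | ENNReal.ofReal t < f x}
          + volume {y | ENNReal.ofReal t < g y}) := le_lintegral_add _ _
    _ ≤ ∫⁻ t in Ioi 0, 2 * volume {z | ENNReal.ofReal t < h z} :=
        lintegral_mono fun t => volume_superlevel_add_le_of_iSup_eq hf hg hfg hfgh _
    _ = _ := lintegral_const_mul' _ _ ENNReal.ofNat_ne_top

theorem Real.lintegral_mul_lintegral_le_sq_of_iSup_ne_top {f g h : ℝ → ℝ≥0∞}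
    (hf : Measurable f) (hg : Measurable g) (hh : Measurable h) (hf_top : ⨆ x, f x ≠ ∞)
    (hg_top : ⨆ y, g y ≠ ∞) (hfgh : ∀ x y, f x * g y ≤ h (midpoint ℝ x y) ^ 2) :
    (∫⁻ x, f x) * ∫⁻ y, g y ≤ (∫⁻ z, h z) ^ 2 := by
  rcases eq_or_ne (⨆ x, f x) 0 with hf0 | hf0
  · simp [ENNReal.iSup_eq_zero.1 hf0]
  rcases eq_or_ne (⨆ y, g y) 0 with hg0 | hg0
  · simp [ENNReal.iSup_eq_zero.1 hg0]
  obtain ⟨r, hr0, hrtop, hr⟩ := ENNReal.exists_inv_mul_eq_mul hf0 hf_top hg0 hg_top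
  have hsum := lintegral_add_lintegral_le_of_iSup_eq (hf.const_mul r⁻¹) (hg.const_mul r) hh
    (by simpa only [ENNReal.mul_iSup] using hr) fun x y => calc
      r⁻¹ * f x * (r * g y) = f x * g y := by
        rw [mul_mul_mul_comm, ENNReal.inv_mul_cancel hr0 hrtop, one_mul]
      _ ≤ h (midpoint ℝ x y) ^ 2 := hfgh x y
  rw [lintegral_const_mul _ hf, lintegral_const_mul _ hg] at hsum
  refine (ENNReal.mul_le_mul_iff_right (a := 4) (by norm_num) (by norm_num)).1 ?_
  calc 4 * ((∫⁻ x, f x) * ∫⁻ y, g y) = 4 * (r⁻¹ * ∫⁻ x, f x) * (r * ∫⁻ y, g y) := by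
        rw [mul_assoc 4, mul_mul_mul_comm, ENNReal.inv_mul_cancel hr0 hrtop, one_mul]
    _ ≤ (r⁻¹ * (∫⁻ x, f x) + r * ∫⁻ y, g y) ^ 2 := ENNReal.four_mul_le_sq_add _ _
    _ ≤ (2 * ∫⁻ z, h z) ^ 2 := by gcongr
    _ = 4 * (∫⁻ z, h z) ^ 2 := by ring

def PrekopaLeindler {E : Type*} [MeasurableSpace E] [AddCommGroup E] [Module ℝ E]
    (μ : Measure E) : Prop :=
  ∀ f g h : E → ℝ≥0∞, Measurable f → Measurable g → Measurable h →
    (∀ x y, f x * g y ≤ h (midpoint ℝ x y) ^ 2) →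
    (∫⁻ x, f x ∂μ) * (∫⁻ y, g y ∂μ) ≤ (∫⁻ z, h z ∂μ) ^ 2

theorem Real.prekopaLeindler_volume : PrekopaLeindler (volume : Measure ℝ) := by
  intro f g h hf hg hh hfgh
  have htrunc : ∀ φ : ℝ → ℝ≥0∞, Measurable φ → ∫⁻ x, φ x = ⨆ N : ℕ, ∫⁻ x, min (φ x) N :=
    fun φ hφ => by
      rw [← lintegral_iSup (fun N => hφ.min measurable_const)
        fun N M hNM x => min_le_min_left _ (Nat.mono_cast hNM)]
      simp_rw [ENNReal.iSup_min_natCast]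
  have hbdd : ∀ (φ : ℝ → ℝ≥0∞) (N : ℕ), ⨆ x, min (φ x) N ≠ ∞ := fun φ N =>
    ne_top_of_le_ne_top (ENNReal.natCast_ne_top N) (iSup_le fun _ => min_le_right _ _)
  rw [htrunc f hf, htrunc g hg, ENNReal.iSup_mul]
  refine iSup_le fun N => ?_
  rw [ENNReal.mul_iSup]
  refine iSup_le fun M => ?_
  exact lintegral_mul_lintegral_le_sq_of_iSup_ne_top (hf.min measurable_const)
    (hg.min measurable_const) hh (hbdd f N) (hbdd g M) fun x y =>
      (mul_le_mul' (min_le_left _ _) (min_le_left _ _)).trans (hfgh x y)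

namespace PrekopaLeindler

variable {E F : Type*} [MeasurableSpace E] [AddCommGroup E] [Module ℝ E]
  [MeasurableSpace F] [AddCommGroup F] [Module ℝ F] {μ : Measure E} {ν : Measure F}

theorem prod [SFinite ν] (hμ : PrekopaLeindler μ) (hν : PrekopaLeindler ν) :
    PrekopaLeindler (μ.prod ν) := by
  intro f g h hf hg hh hfgh
  rw [lintegral_prod f hf.aemeasurable, lintegral_prod g hg.aemeasurable,
    lintegral_prod h hh.aemeasurable]
  refine hμ _ _ _ hf.lintegral_prod_right' hg.lintegral_prod_right' hh.lintegral_prod_right'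
    fun x x' => hν _ _ _ (hf.comp measurable_prodMk_left) (hg.comp measurable_prodMk_left)
      (hh.comp measurable_prodMk_left) fun y y' => ?_
  simpa only [midpoint_eq_smul_add, Prod.mk_add_mk, Prod.smul_mk] using hfgh (x, y) (x', y')

theorem map (hμ : PrekopaLeindler μ) (L : E →ₗ[ℝ] F) (hL : MeasurePreserving L μ ν) :
    PrekopaLeindler ν := by
  intro f g h hf hg hh hfgh
  rw [← hL.lintegral_comp hf, ← hL.lintegral_comp hg, ← hL.lintegral_comp hh]
  refine hμ _ _ _ (hf.comp hL.measurable) (hg.comp hL.measurable) (hh.comp hL.measurable)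
    fun x y => ?_
  simpa only [Function.comp_apply, midpoint_eq_smul_add, map_smul, map_add] using hfgh (L x) (L y)

end PrekopaLeindler

theorem prekopaLeindler_volume_pi : ∀ n : ℕ, PrekopaLeindler (volume : Measure (Fin n → ℝ))
  | 0 => fun f g h _ _ _ hfgh => by
    simpa only [Measure.volume_pi_eq_dirac 0, lintegral_dirac, midpoint_self] using hfgh 0 0
  | n + 1 => by
    have hprod := Real.prekopaLeindler_volume.prod (prekopaLeindler_volume_pi n)
    rw [← Measure.volume_eq_prod] at hprod
    have hcons : ⇑(Fin.consLinearEquiv ℝ fun _ : Fin (n + 1) => ℝ) =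
        (MeasurableEquiv.piFinSuccAbove (fun _ => ℝ) 0).symm :=
      funext fun p => (Fin.insertNth_zero' p.1 p.2).symm
    refine hprod.map (Fin.consLinearEquiv ℝ fun _ => ℝ).toLinearMap ?_
    simpa only [LinearEquiv.coe_coe, hcons]
      using (volume_preserving_piFinSuccAbove (fun _ : Fin (n + 1) => ℝ) 0).symm

theorem EuclideanSpace.prekopaLeindler_volume (n : ℕ) :
    PrekopaLeindler (volume : Measure (EuclideanSpace ℝ (Fin n))) :=
  (prekopaLeindler_volume_pi n).map (WithLp.linearEquiv 2 ℝ (Fin n → ℝ)).symm.toLinearMap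
    (PiLp.volume_preserving_toLp (Fin n))

theorem norm_midpoint_sq {E : Type*} [NormedAddCommGroup E] [InnerProductSpace ℝ E] (x y : E) :
    ‖midpoint ℝ x y‖ ^ 2 = (‖x‖ ^ 2 + ‖y‖ ^ 2) / 2 - ‖x - y‖ ^ 2 / 4 := by
  have := parallelogram_law_with_norm ℝ x y
  rw [midpoint_eq_smul_add, norm_smul, invOf_eq_inv, norm_inv, Real.norm_two]
  linear_combination this / 4

theorem lintegral_exp_neg_sq_norm_div_two (n : ℕ) :
    ∫⁻ x : EuclideanSpace ℝ (Fin n), ENNReal.ofReal (exp (-‖x‖ ^ 2 / 2)) =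
      ENNReal.ofReal ((2 * π) ^ ((n : ℝ) / 2)) := by
  have hint : ∫ x : EuclideanSpace ℝ (Fin n), exp (-‖x‖ ^ 2 / 2) = (2 * π) ^ ((n : ℝ) / 2) := by
    have := GaussianFourier.integral_rexp_neg_mul_sq_norm (V := EuclideanSpace ℝ (Fin n))
      one_half_pos
    rw [finrank_euclideanSpace_fin] at this
    convert this using 2 <;> ring_nf
  rw [← ofReal_integral_eq_lintegral_ofReal
    (Integrable.of_integral_ne_zero (by rw [hint]; positivity))
    (ae_of_all _ fun x => (exp_pos _).le), hint]

theorem lintegral_gaussian (n : ℕ) (F : EuclideanSpace ℝ (Fin n) → ℝ≥0∞) :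
    ∫⁻ x, F x ∂gaussian n = ENNReal.ofReal ((2 * π) ^ (-(n : ℝ) / 2)) *
      ∫⁻ x, ENNReal.ofReal (exp (-‖x‖ ^ 2 / 2)) * F x := by
  rw [gaussian, lintegral_withDensity_eq_lintegral_mul_non_measurable _ (by fun_prop)
    (ae_of_all _ fun _ => ENNReal.ofReal_lt_top), ← lintegral_const_mul' _ _ ENNReal.ofReal_ne_top]
  simp only [Pi.mul_apply, ENNReal.ofReal_mul (rpow_nonneg two_pi_pos.le _), mul_assoc]

instance (n : ℕ) : IsProbabilityMeasure (gaussian n) where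
  measure_univ := by
    rw [← setLIntegral_one, Measure.restrict_univ, lintegral_gaussian]
    simp_rw [mul_one]
    rw [lintegral_exp_neg_sq_norm_div_two, ← ENNReal.ofReal_mul (by positivity),
      ← rpow_add two_pi_pos, neg_div, neg_add_cancel, rpow_zero, ENNReal.ofReal_one]

theorem gaussian_mul_lintegral_exp_infDist_sq_le_one (n : ℕ)
    (K : Set (EuclideanSpace ℝ (Fin n))) :
    gaussian n K * ∫⁻ x, ENNReal.ofReal (exp (infDist x K ^ 2 / 4)) ∂gaussian n ≤ 1 := by
  set c := ENNReal.ofReal ((2 * π) ^ (-(n : ℝ) / 2))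
  set φ : EuclideanSpace ℝ (Fin n) → ℝ≥0∞ := fun x => ENNReal.ofReal (exp (-‖x‖ ^ 2 / 2))
  set ψ : EuclideanSpace ℝ (Fin n) → ℝ≥0∞ := fun x => ENNReal.ofReal (exp (infDist x K ^ 2 / 4))
  have hφ : Measurable φ := by fun_prop
  have hψ : Measurable ψ := by fun_prop
  have hpoint : ∀ x y, φ x * ψ x * (closure K).indicator φ y ≤ φ (midpoint ℝ x y) ^ 2 := by
    intro x y
    by_cases hy : y ∈ closure K
    · have hd : infDist x K ≤ ‖x - y‖ := by
        rw [← infDist_closure, ← dist_eq_norm]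
        exact infDist_le_dist_of_mem hy
      have hm := norm_midpoint_sq x y
      simp only [φ, ψ, indicator_of_mem hy]
      rw [← ENNReal.ofReal_mul (exp_pos _).le, ← ENNReal.ofReal_mul (by positivity),
        ← ENNReal.ofReal_pow (exp_pos _).le, ← exp_add, ← exp_add, ← exp_nat_mul]
      refine ENNReal.ofReal_le_ofReal (exp_le_exp.2 ?_)
      nlinarith [infDist_nonneg (x := x) (s := K)]
    · simp [indicator_of_notMem hy]
  have hPL := EuclideanSpace.prekopaLeindler_volume n (fun x => φ x * ψ x)
    ((closure K).indicator φ) φ (hφ.mul hψ) (hφ.indicator isClosed_closure.measurableSet) hφ hpoint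
  have hc : c * ∫⁻ x, φ x = 1 := by simpa using (lintegral_gaussian n 1).symm
  have hK : gaussian n K ≤ c * ∫⁻ y, (closure K).indicator φ y := calc
    gaussian n K ≤ gaussian n (closure K) := measure_mono subset_closure
    _ = c * ∫⁻ y, (closure K).indicator φ y := by
      rw [← lintegral_indicator_one isClosed_closure.measurableSet, lintegral_gaussian]
      congr 2 with y
      by_cases hy : y ∈ closure K <;> simp [hy, φ]
  calc gaussian n K * ∫⁻ x, ψ x ∂gaussian n
      ≤ (c * ∫⁻ y, (closure K).indicator φ y) * (c * ∫⁻ x, φ x * ψ x) := by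
        rw [lintegral_gaussian]
        gcongr
    _ = c ^ 2 * ((∫⁻ x, φ x * ψ x) * ∫⁻ y, (closure K).indicator φ y) := by ring
    _ ≤ c ^ 2 * (∫⁻ z, φ z) ^ 2 := by gcongr
    _ = 1 := by rw [← mul_pow, hc, one_pow]

theorem gaussian_mul_gaussian_compl_cthickening_le (n : ℕ) (K : Set (EuclideanSpace ℝ (Fin n)))
    {δ : ℝ} (hδ : 0 ≤ δ) :
    gaussian n K * gaussian n (cthickening δ K)ᶜ ≤ ENNReal.ofReal (exp (-δ ^ 2 / 4)) := by
  rcases K.eq_empty_or_nonempty with rfl | hK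
  · simp
  set ψ : EuclideanSpace ℝ (Fin n) → ℝ≥0∞ := fun x => ENNReal.ofReal (exp (infDist x K ^ 2 / 4))
  set e := ENNReal.ofReal (exp (δ ^ 2 / 4))
  have hψ : Measurable ψ := by fun_prop
  have hsub : (cthickening δ K)ᶜ ⊆ {x | e ≤ ψ x} := fun x hx => by
    have : δ < infDist x K := by
      rw [mem_compl_iff, mem_cthickening_iff, not_le] at hx
      exact (ENNReal.ofReal_lt_iff_lt_toReal hδ (infEDist_ne_top hK)).1 hx
    exact ENNReal.ofReal_le_ofReal (exp_le_exp.2 (by gcongr))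
  rw [neg_div, exp_neg, ENNReal.ofReal_inv_of_pos (exp_pos _), ENNReal.le_inv_iff_mul_le]
  calc gaussian n K * gaussian n (cthickening δ K)ᶜ * e
      ≤ gaussian n K * (e * gaussian n {x | e ≤ ψ x}) := by
        rw [mul_assoc, mul_comm _ e]
        gcongr
    _ ≤ gaussian n K * ∫⁻ x, ψ x ∂gaussian n := by gcongr; exact mul_meas_ge_le_lintegral hψ e
    _ ≤ 1 := gaussian_mul_lintegral_exp_infDist_sq_le_one n K

theorem measure_thickening_ge_general (n : ℕ) (ε : ℝ)
    (K : Set (EuclideanSpace ℝ (Fin n)))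
    (hm : ENNReal.ofReal (Real.exp (-ε * n)) ≤ gaussian n K) :
    ENNReal.ofReal (1 - Real.exp (-ε * n)) ≤
      gaussian n (Metric.cthickening (3 * Real.sqrt (ε * n)) K) := by
  set δ := 3 * √(ε * n)
  set e := ENNReal.ofReal (exp (-ε * n))
  have hδ : exp (-δ ^ 2 / 4) ≤ exp (-ε * n) * exp (-ε * n) := by
    rw [← exp_add, exp_le_exp, mul_pow, sq_sqrt']
    linarith [le_max_left (ε * n) 0, le_max_right (ε * n) 0]
  have hcompl : gaussian n (cthickening δ K)ᶜ ≤ e := by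
    refine (ENNReal.mul_le_mul_iff_right (a := e) (by simp [e, exp_pos]) ENNReal.ofReal_ne_top).1 ?_
    calc e * gaussian n (cthickening δ K)ᶜ ≤ gaussian n K * gaussian n (cthickening δ K)ᶜ := by
          gcongr
      _ ≤ ENNReal.ofReal (exp (-δ ^ 2 / 4)) :=
          gaussian_mul_gaussian_compl_cthickening_le n K (by positivity)
      _ ≤ e * e := by rw [← ENNReal.ofReal_mul (exp_pos _).le]; exact ENNReal.ofReal_le_ofReal hδ
  rw [← compl_compl (cthickening δ K),
    prob_compl_eq_one_sub isClosed_cthickening.measurableSet.compl,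
    ENNReal.ofReal_sub _ (exp_pos _).le, ENNReal.ofReal_one]
  exact tsub_le_tsub_left hcompl 1

theorem measure_thickening_ge (n : ℕ) (ε : ℝ) (hε : 0 < ε)
    (K : Set (EuclideanSpace ℝ (Fin n))) (hK : MeasurableSet K)
    (hm : ENNReal.ofReal (Real.exp (-ε * n)) ≤ gaussian n K) :
    ENNReal.ofReal (1 - Real.exp (-ε * n)) ≤
      gaussian n (Metric.cthickening (3 * Real.sqrt (ε * n)) K) :=
  measure_thickening_ge_general n ε K hm
end

section
/- Let 0 < ε ≤ 1/9000 and δ := (3/2) ε log₂(1/ε). Let K ⊆ ℝⁿ be a symmetric closed convex body with γₙ(K) ≥ e^{-δn}. Then for n sufficiently large, there exists a point y ∈ K ∩ [-1,1]ⁿ with yᵢ ∈ {-1,1} for at least εn coordinates i. -/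
open MeasureTheory Real

/-!
Sum the Gaussian measures of the `2ⁿ` translates `K + v`, `v ∈ {±1}ⁿ`. Pairing `v` with `-v`,
the densities satisfy `φ(y - v) + φ(y + v) = 2 cosh ⟨y, v⟩ e^{-n/2} φ(y) ≥ 2 e^{-n/2} φ(y)`, so the
total is at least `2ⁿ e^{-n/2} γₙ(K) ≥ 2ⁿ e^{-n/2 - δn}`. For `ε ≤ 1/9000` this exceeds the
Chernoff bound `16^{εn} (17/16)ⁿ` on a Hamming ball of radius `εn`, so some point `z` lies in
`K + v_s` and `K + v_t` with `|s ∆ t| > εn`. By symmetry and convexity `(v_t - v_s)/2 ∈ K`, and this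
vector has coordinates in `{-1, 0, 1}`, equal to `±1` exactly on `s ∆ t`.
-/

open Finset
open scoped ENNReal symmDiff

section Gaussian

variable {n : ℕ}

noncomputable def gaussianDensity (n : ℕ) (x : EuclideanSpace ℝ (Fin n)) : ℝ :=
  (2 * π) ^ (-(n : ℝ) / 2) * exp (-‖x‖ ^ 2 / 2)

theorem gaussian_eq_withDensity (n : ℕ) :
    gaussian n = volume.withDensity fun x => ENNReal.ofReal (gaussianDensity n x) :=
  rfl

theorem gaussianDensity_nonneg (x : EuclideanSpace ℝ (Fin n)) : 0 ≤ gaussianDensity n x := by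
  unfold gaussianDensity
  positivity

theorem continuous_gaussianDensity (n : ℕ) : Continuous (gaussianDensity n) := by
  unfold gaussianDensity
  fun_prop

theorem integral_gaussianDensity (n : ℕ) : ∫ x, gaussianDensity n x = 1 := by
  have h := GaussianFourier.integral_rexp_neg_mul_sq_norm
    (V := EuclideanSpace ℝ (Fin n)) (b := 1 / 2) (by norm_num)
  simp only [gaussianDensity, integral_const_mul, neg_div, div_eq_inv_mul (‖_‖ ^ 2), ← neg_mul]
  rw [← one_div, h, finrank_euclideanSpace_fin, show π / (1 / 2) = 2 * π by ring,
    ← rpow_add (by positivity), neg_add_cancel, rpow_zero]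

instance inst_s9 (n : ℕ) : IsProbabilityMeasure (gaussian n) := by
  have hint : Integrable (gaussianDensity n) :=
    Integrable.of_integral_ne_zero (by rw [integral_gaussianDensity]; exact one_ne_zero)
  constructor
  rw [gaussian_eq_withDensity, withDensity_apply _ MeasurableSet.univ, Measure.restrict_univ,
    ← ofReal_integral_eq_lintegral_ofReal hint (.of_forall gaussianDensity_nonneg),
    integral_gaussianDensity, ENNReal.ofReal_one]

theorem gaussian_preimage_sub {K : Set (EuclideanSpace ℝ (Fin n))} (hK : MeasurableSet K)
    (x : EuclideanSpace ℝ (Fin n)) :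
    gaussian n ((· - x) ⁻¹' K) = ∫⁻ y in K, ENNReal.ofReal (gaussianDensity n (y + x)) := by
  rw [gaussian_eq_withDensity, withDensity_apply _ (measurable_sub_const x hK),
    ← (measurePreserving_add_right volume x).setLIntegral_comp_preimage_emb
      (Homeomorph.addRight x).isClosedEmbedding.measurableEmbedding]
  simp only [Set.preimage_preimage, add_sub_cancel_right, Set.preimage_id']

theorem two_mul_exp_mul_gaussianDensity_le (x y : EuclideanSpace ℝ (Fin n)) :
    2 * exp (-‖x‖ ^ 2 / 2) * gaussianDensity n y ≤
      gaussianDensity n (y + x) + gaussianDensity n (y - x) := by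
  have hsplit : ∀ t : ℝ, exp (-(‖y‖ ^ 2 + 2 * t + ‖x‖ ^ 2) / 2) =
      exp (-‖y‖ ^ 2 / 2) * exp (-‖x‖ ^ 2 / 2) * exp (-t) := by
    intro t
    rw [← exp_add, ← exp_add]
    ring_nf
  have hcosh : 2 * exp (-‖x‖ ^ 2 / 2) * gaussianDensity n y ≤
      2 * cosh (inner ℝ y x) * exp (-‖x‖ ^ 2 / 2) * gaussianDensity n y := by
    have := gaussianDensity_nonneg (n := n) y
    gcongr
    linarith [one_le_cosh (inner ℝ y x)]
  convert hcosh using 1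
  rw [gaussianDensity, gaussianDensity, gaussianDensity, norm_add_sq_real, norm_sub_sq_real,
    sub_eq_add_neg _ (2 * _), ← mul_neg, hsplit, hsplit, cosh_eq, neg_neg]
  ring

theorem ofReal_two_mul_exp_mul_gaussian_le {K : Set (EuclideanSpace ℝ (Fin n))}
    (hK : MeasurableSet K) (x : EuclideanSpace ℝ (Fin n)) :
    ENNReal.ofReal (2 * exp (-‖x‖ ^ 2 / 2)) * gaussian n K ≤
      gaussian n ((· - x) ⁻¹' K) + gaussian n ((· - -x) ⁻¹' K) := by
  have hmeas : ∀ z, Measurable fun y => ENNReal.ofReal (gaussianDensity n (y + z)) := fun z =>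
    ((continuous_gaussianDensity n).comp (continuous_add_const z)).measurable.ennreal_ofReal
  rw [gaussian_preimage_sub hK, gaussian_preimage_sub hK, gaussian_eq_withDensity,
    withDensity_apply _ hK, ← lintegral_const_mul _ (by simpa using hmeas 0),
    ← lintegral_add_left (hmeas x)]
  refine lintegral_mono fun y => ?_
  rw [← ENNReal.ofReal_mul (by positivity),
    ← ENNReal.ofReal_add (gaussianDensity_nonneg _) (gaussianDensity_nonneg _)]
  exact ENNReal.ofReal_le_ofReal
    (by simpa [← sub_eq_add_neg] using two_mul_exp_mul_gaussianDensity_le x y)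

end Gaussian

section SignVector

variable {ι : Type*} [DecidableEq ι]

noncomputable def signVector (s : Finset ι) : EuclideanSpace ℝ ι :=
  WithLp.toLp 2 fun i => if i ∈ s then 1 else -1

theorem signVector_apply (s : Finset ι) (i : ι) :
    signVector s i = if i ∈ s then 1 else -1 :=
  rfl

theorem norm_signVector_sq [Fintype ι] (s : Finset ι) : ‖signVector s‖ ^ 2 = Fintype.card ι := by
  rw [EuclideanSpace.norm_eq, sq_sqrt (by positivity)]
  simp [signVector_apply, apply_ite]

theorem signVector_compl [Fintype ι] (s : Finset ι) : signVector sᶜ = -signVector s := by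
  ext i
  by_cases hi : i ∈ s <;> simp [signVector_apply, hi]

theorem abs_half_smul_sub_signVector_le_one (s t : Finset ι) (i : ι) :
    |((1 / 2 : ℝ) • (signVector t - signVector s)) i| ≤ 1 := by
  by_cases hs : i ∈ s <;> by_cases ht : i ∈ t <;> norm_num [signVector_apply, hs, ht]

theorem abs_half_smul_sub_signVector_of_mem_symmDiff {s t : Finset ι} {i : ι} (hi : i ∈ s ∆ t) :
    |((1 / 2 : ℝ) • (signVector t - signVector s)) i| = 1 := by
  rcases Finset.mem_symmDiff.1 hi with ⟨hs, ht⟩ | ⟨ht, hs⟩ <;> norm_num [signVector_apply, hs, ht]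

end SignVector

theorem ofReal_mul_gaussian_le_sum_preimage_sub_signVector {n : ℕ}
    {K : Set (EuclideanSpace ℝ (Fin n))} (hK : MeasurableSet K) :
    ENNReal.ofReal (2 ^ n * exp (-n / 2)) * gaussian n K ≤
      ∑ s : Finset (Fin n), gaussian n ((· - signVector s) ⁻¹' K) := by
  have hpair : ∀ s : Finset (Fin n), ENNReal.ofReal (2 * exp (-n / 2)) * gaussian n K ≤
      gaussian n ((· - signVector s) ⁻¹' K) + gaussian n ((· - signVector sᶜ) ⁻¹' K) := by
    intro s
    simpa [signVector_compl, norm_signVector_sq] using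
      ofReal_two_mul_exp_mul_gaussian_le hK (signVector s)
  have hcompl : ∑ s : Finset (Fin n), gaussian n ((· - signVector sᶜ) ⁻¹' K) =
      ∑ s : Finset (Fin n), gaussian n ((· - signVector s) ⁻¹' K) :=
    Fintype.sum_bijective compl compl_involutive.bijective _ _ fun _ => rfl
  have hsum := card_nsmul_le_sum univ _ _ fun s _ => hpair s
  rw [sum_add_distrib, hcompl, ← two_mul, card_univ, Fintype.card_finset, Fintype.card_fin,
    nsmul_eq_mul] at hsum
  rw [← ENNReal.mul_le_mul_iff_right two_ne_zero ENNReal.ofNat_ne_top]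
  calc 2 * (ENNReal.ofReal (2 ^ n * exp (-n / 2)) * gaussian n K)
      = 2 ^ n * (ENNReal.ofReal (2 * exp (-n / 2)) * gaussian n K) := by
        rw [ENNReal.ofReal_mul (by positivity), ENNReal.ofReal_mul (by positivity),
          ENNReal.ofReal_pow (by positivity), ENNReal.ofReal_ofNat]
        ring
    _ ≤ _ := by exact_mod_cast hsum

open Classical in
theorem exists_lt_card_filter_mem_of_lt_sum_measure {Ω ι : Type*} [MeasurableSpace Ω]
    [Fintype ι] {μ : Measure Ω} {A : ι → Set Ω} (hA : ∀ i, MeasurableSet (A i)) {B : ℕ}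
    (h : B * μ Set.univ < ∑ i, μ (A i)) :
    ∃ z, B < #{i | z ∈ A i} := by
  by_contra! hle
  refine h.not_ge ?_
  calc ∑ i, μ (A i) = ∫⁻ z, ∑ i, (A i).indicator 1 z ∂μ := by
        rw [lintegral_finsetSum _ fun i _ => measurable_one.indicator (hA i)]
        simp [lintegral_indicator_one (hA _)]
    _ = ∫⁻ z, (#{i | z ∈ A i} : ℝ≥0∞) ∂μ := by
        simp only [Set.indicator_apply, Pi.one_apply, sum_boole]
    _ ≤ ∫⁻ _, (B : ℝ≥0∞) ∂μ := lintegral_mono fun z => Nat.cast_le.2 (hle z)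
    _ = B * μ Set.univ := lintegral_const _

section Hamming

variable {α : Type*} [Fintype α] [DecidableEq α]

theorem card_filter_card_symmDiff_le (s : Finset α) (m : ℕ) :
    #{t | #(s ∆ t) ≤ m} ≤ ∑ k ∈ range (m + 1), (Fintype.card α).choose k :=
  calc #{t | #(s ∆ t) ≤ m}
      ≤ #((range (m + 1)).biUnion fun k => powersetCard k (univ : Finset α)) :=
        card_le_card_of_injOn (s ∆ ·)
          (fun t ht => by simpa [Nat.lt_succ_iff] using (mem_filter.1 ht).2)
          (fun _ _ _ _ h => symmDiff_right_injective s h)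
    _ ≤ ∑ k ∈ range (m + 1), #(powersetCard k (univ : Finset α)) := card_biUnion_le
    _ = ∑ k ∈ range (m + 1), (Fintype.card α).choose k := by simp [card_powersetCard]

theorem exists_lt_card_symmDiff_of_sum_choose_lt_card {T : Finset (Finset α)} {m : ℕ}
    (h : ∑ k ∈ range (m + 1), (Fintype.card α).choose k < #T) :
    ∃ s ∈ T, ∃ t ∈ T, m < #(s ∆ t) := by
  obtain ⟨s, hs⟩ := card_pos.1 (pos_of_gt h)
  by_contra! hT
  refine h.not_ge ((card_le_card fun t ht => ?_).trans (card_filter_card_symmDiff_le s m))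
  exact mem_filter.2 ⟨mem_univ t, hT s hs t ht⟩

end Hamming

theorem sum_range_choose_le_pow_div_pow {x : ℝ} (hx₀ : 0 < x) (hx₁ : x ≤ 1) (n m : ℕ) :
    ((∑ k ∈ range (m + 1), n.choose k : ℕ) : ℝ) ≤ (x + 1) ^ n / x ^ m := by
  have hterm : ∀ k, x ^ k * 1 ^ (n - k) * n.choose k = (n.choose k * x ^ k : ℝ) := fun k => by
    rw [one_pow, mul_one, mul_comm]
  rw [le_div_iff₀ (by positivity), add_pow]
  push_cast
  simp only [hterm, sum_mul]
  calc ∑ k ∈ range (m + 1), (n.choose k * x ^ m : ℝ)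
      ≤ ∑ k ∈ range (m + 1), (n.choose k * x ^ k : ℝ) :=
        sum_le_sum fun k hk => mul_le_mul_of_nonneg_left
          (pow_le_pow_of_le_one hx₀.le hx₁ (Nat.lt_succ_iff.1 (mem_range.1 hk))) (by positivity)
    _ ≤ ∑ k ∈ range (m + n + 1), (n.choose k * x ^ k : ℝ) :=
        sum_le_sum_of_subset_of_nonneg (range_subset_range.2 (by omega)) fun _ _ _ => by positivity
    _ = ∑ k ∈ range (n + 1), (n.choose k * x ^ k : ℝ) := by
        refine (sum_subset (range_subset_range.2 (by omega)) fun k _ hk => ?_).symm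
        rw [Nat.choose_eq_zero_of_lt (by simpa using hk), Nat.cast_zero, zero_mul]

theorem mul_log_one_div_le_two_mul_sqrt {ε : ℝ} (hε : 0 < ε) : ε * log (1 / ε) ≤ 2 * √ε :=
  calc ε * log (1 / ε) ≤ ε * ((1 / ε) ^ (1 / 2 : ℝ) / (1 / 2)) := by
        gcongr
        exact log_le_rpow_div (by positivity) one_half_pos
    _ = 2 * (ε / √ε) := by
        rw [← sqrt_eq_rpow, one_div, sqrt_inv]
        ring
    _ = 2 * √ε := by rw [div_sqrt]

theorem exponent_lt_log_two {ε δ : ℝ} (hε₀ : 0 < ε) (hε : ε ≤ 1 / 9000)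
    (hδ : δ = 3 / 2 * ε * logb 2 (1 / ε)) :
    ε * log 16 + log (17 / 16) + 1 / 2 + δ < log 2 := by
  have hlog2 := log_two_gt_d9
  have hlog16 : log 16 = 4 * log 2 := by
    rw [show (16 : ℝ) = 2 ^ 4 by norm_num, log_pow]
    norm_num
  have hlog1716 : log (17 / 16) ≤ 1 / 16 := by
    linarith [log_le_sub_one_of_pos (show (0 : ℝ) < 17 / 16 by norm_num)]
  have hεlog16 : ε * log 16 ≤ 1 / 9000 * log 16 := by gcongr
  have hsqrt : √ε ≤ 1 / 94 := sqrt_le_iff.2 ⟨by norm_num, by linarith⟩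
  have hδ' : δ ≤ 0.0461 := by
    rw [hδ, logb, mul_div_assoc', div_le_iff₀ (log_pos one_lt_two)]
    linarith [mul_log_one_div_le_two_mul_sqrt hε₀]
  linarith

theorem sum_choose_floor_lt {ε δ : ℝ} (hε : 0 ≤ ε)
    (hc : ε * log 16 + log (17 / 16) + 1 / 2 + δ < log 2) {n : ℕ} (hn : 0 < n) :
    ((∑ k ∈ range (⌊ε * n⌋₊ + 1), n.choose k : ℕ) : ℝ) < 2 ^ n * exp (-n / 2) * exp (-δ * n) := by
  set m := ⌊ε * n⌋₊
  have hm : (m : ℝ) ≤ ε * n := Nat.floor_le (by positivity)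
  have hlin : n * log (17 / 16) + m * log 16 < n * log 2 + -n / 2 + -δ * n := by
    have := mul_le_mul_of_nonneg_right hm (log_nonneg (by norm_num : (1 : ℝ) ≤ 16))
    have := mul_lt_mul_of_pos_left hc (show (0 : ℝ) < n by exact_mod_cast hn)
    linarith
  calc _ ≤ (1 / 16 + 1) ^ n / (1 / 16) ^ m :=
        sum_range_choose_le_pow_div_pow (by norm_num) (by norm_num) n m
    _ = exp (n * log (17 / 16) + m * log 16) := by
        rw [exp_add, exp_nat_mul, exp_nat_mul, exp_log (by norm_num), exp_log (by norm_num),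
          one_div, inv_pow, div_inv_eq_mul]
        norm_num
    _ < exp (n * log 2 + -n / 2 + -δ * n) := exp_lt_exp.2 hlin
    _ = 2 ^ n * exp (-n / 2) * exp (-δ * n) := by
        rw [exp_add, exp_add, exp_nat_mul, exp_log two_pos]

theorem half_smul_sub_mem {E : Type*} [AddCommGroup E] [Module ℝ E] {K : Set E}
    (hsymm : ∀ x ∈ K, -x ∈ K) (hconv : Convex ℝ K) {a b : E} (ha : a ∈ K) (hb : b ∈ K) :
    (1 / 2 : ℝ) • (a - b) ∈ K := by
  have hhalf : (0 : ℝ) ≤ 1 / 2 := by norm_num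
  simpa [smul_sub, sub_eq_add_neg] using hconv ha (hsymm b hb) hhalf hhalf (by norm_num)

theorem main_partial_coloring (ε : ℝ) (hε0 : 0 < ε) (hε : ε ≤ 1 / 9000)
    (δ : ℝ) (hδ : δ = (3 / 2) * ε * Real.logb 2 (1 / ε)) :
    ∃ N : ℕ, ∀ n ≥ N, ∀ K : Set (EuclideanSpace ℝ (Fin n)),
      IsClosed K → (∀ x ∈ K, -x ∈ K) → Convex ℝ K →
      ENNReal.ofReal (Real.exp (-δ * n)) ≤ gaussian n K →
      ∃ y ∈ K, (∀ i, |y i| ≤ 1) ∧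
        ε * n ≤ (Finset.univ.filter fun i => y i = 1 ∨ y i = -1).card := by
  classical
  refine ⟨1, fun n hn K hKcl hKsym hKconv hKγ => ?_⟩
  set m := ⌊ε * n⌋₊
  set A : Finset (Fin n) → Set (EuclideanSpace ℝ (Fin n)) := fun s => (· - signVector s) ⁻¹' K
  have hKm := hKcl.measurableSet
  have hmass : ((∑ k ∈ range (m + 1), n.choose k : ℕ) : ℝ≥0∞) * gaussian n Set.univ <
      ∑ s, gaussian n (A s) :=
    calc ((∑ k ∈ range (m + 1), n.choose k : ℕ) : ℝ≥0∞) * gaussian n Set.univ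
        = ENNReal.ofReal ((∑ k ∈ range (m + 1), n.choose k : ℕ) : ℝ) := by
          rw [measure_univ, mul_one, ENNReal.ofReal_natCast]
      _ < ENNReal.ofReal (2 ^ n * exp (-n / 2) * exp (-δ * n)) :=
          (ENNReal.ofReal_lt_ofReal_iff (by positivity)).2
            (sum_choose_floor_lt hε0.le (exponent_lt_log_two hε0 hε hδ) hn)
      _ = ENNReal.ofReal (2 ^ n * exp (-n / 2)) * ENNReal.ofReal (exp (-δ * n)) :=
          ENNReal.ofReal_mul (by positivity)
      _ ≤ ENNReal.ofReal (2 ^ n * exp (-n / 2)) * gaussian n K := by gcongr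
      _ ≤ ∑ s, gaussian n (A s) := ofReal_mul_gaussian_le_sum_preimage_sub_signVector hKm
  obtain ⟨z, hz⟩ :=
    exists_lt_card_filter_mem_of_lt_sum_measure (fun s => measurable_sub_const _ hKm) hmass
  obtain ⟨s, hs, t, ht, hst⟩ :=
    exists_lt_card_symmDiff_of_sum_choose_lt_card (α := Fin n) (by rwa [Fintype.card_fin])
  refine ⟨(1 / 2 : ℝ) • (signVector t - signVector s), ?_,
    abs_half_smul_sub_signVector_le_one s t, ?_⟩
  · have := half_smul_sub_mem hKsym hKconv (a := z - signVector s) (b := z - signVector t)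
      (mem_filter.1 hs).2 (mem_filter.1 ht).2
    rwa [sub_sub_sub_cancel_left] at this
  · calc ε * n ≤ m + 1 := (Nat.lt_floor_add_one _).le
      _ ≤ #(s ∆ t) := by exact_mod_cast hst
      _ ≤ _ := by
        exact_mod_cast card_le_card fun i hi => mem_filter.2 ⟨mem_univ i,
          (abs_eq zero_le_one).1 (abs_half_smul_sub_signVector_of_mem_symmDiff hi)⟩
end
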